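/- arXiv:1905.06023 — 2 statements merged into one kernel-verified Lean document; each statement's English description precedes it below -/
import Mathlib

section
/- The Beta calibration map c_β(q) = Φ(a·ln(q) − b·ln(1−q) + c), where Φ(z) = 1/(1+e^{−z}), is monotonically nondecreasing on (0,1) if and only if a ≥ 0 and b ≥ 0. -/
/-!
The Beta calibration map is `sigmoid ∘ g` with `g q = a ln q - b ln (1 - q) + c`, and the sigmoid is
strictly increasing, so only the monotonicity of `g` matters. If `a, b ≥ 0`, both logarithmic terms
of `g` are nondecreasing. Conversely, a monotone `g` has `g' q = a / q + b / (1 - q) ≥ 0`, i.e.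
`a (1 - q) + b q ≥ 0` on `(0, 1)`; by continuity this persists at `q = 0` and `q = 1`.
-/

open Set

noncomputable def betaCal (a b c : ℝ) (q : ℝ) : ℝ :=
  1 / (1 + Real.exp (-(a * Real.log q - b * Real.log (1 - q) + c)))

open Real

theorem StrictMono.monotoneOn_comp_iff {α β γ : Type*} [Preorder α] [LinearOrder β] [Preorder γ]
    {f : β → γ} {g : α → β} {s : Set α} (hf : StrictMono f) :
    MonotoneOn (f ∘ g) s ↔ MonotoneOn g s :=
  ⟨fun h _ hx _ hy hxy ↦ hf.le_iff_le.mp (h hx hy hxy), hf.monotone.comp_monotoneOn⟩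

theorem nonneg_of_forall_mem_Ioo_affine_nonneg {a b : ℝ}
    (h : ∀ q ∈ Ioo (0 : ℝ) 1, 0 ≤ a * (1 - q) + b * q) : 0 ≤ a ∧ 0 ≤ b := by
  have hclosed : IsClosed {q : ℝ | 0 ≤ a * (1 - q) + b * q} :=
    isClosed_le continuous_const (by fun_prop)
  have hIcc : Icc (0 : ℝ) 1 ⊆ {q : ℝ | 0 ≤ a * (1 - q) + b * q} := by
    rw [← closure_Ioo zero_ne_one]
    exact closure_minimal h hclosed
  have h₀ : 0 ≤ a * (1 - 0) + b * 0 := hIcc (left_mem_Icc.mpr zero_le_one)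
  have h₁ : 0 ≤ a * (1 - 1) + b * 1 := hIcc (right_mem_Icc.mpr zero_le_one)
  constructor <;> linarith

noncomputable def betaLogit (a b c q : ℝ) : ℝ :=
  a * log q - b * log (1 - q) + c

theorem betaCal_eq_sigmoid_comp (a b c : ℝ) : betaCal a b c = sigmoid ∘ betaLogit a b c := by
  ext q
  simp [betaCal, betaLogit, sigmoid]

section

variable {a b : ℝ} (c : ℝ) {q : ℝ}

theorem hasDerivAt_betaLogit (hq : q ∈ Ioo (0 : ℝ) 1) :
    HasDerivAt (betaLogit a b c) (a / q + b / (1 - q)) q := by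
  have hlog₁ := (hasDerivAt_log hq.1.ne').const_mul a
  have hlog₂ := ((hasDerivAt_id' q).const_sub 1).log (sub_pos.mpr hq.2).ne'
  refine ((hlog₁.fun_sub (hlog₂.const_mul b)).add_const c).congr_deriv ?_
  field_simp
  ring

theorem monotoneOn_betaLogit (ha : 0 ≤ a) (hb : 0 ≤ b) :
    MonotoneOn (betaLogit a b c) (Ioo 0 1) := by
  intro x hx y hy hxy
  have hlog : log x ≤ log y := log_le_log hx.1 hxy
  have hlog₁ : log (1 - y) ≤ log (1 - x) := log_le_log (sub_pos.mpr hy.2) (by linarith)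
  simp only [betaLogit]
  linarith [mul_le_mul_of_nonneg_left hlog ha, mul_le_mul_of_nonneg_left hlog₁ hb]

theorem nonneg_of_monotoneOn_betaLogit (h : MonotoneOn (betaLogit a b c) (Ioo 0 1))
    (hq : q ∈ Ioo (0 : ℝ) 1) : 0 ≤ a * (1 - q) + b * q := by
  have hderiv : 0 ≤ a / q + b / (1 - q) := by
    rw [← (hasDerivAt_betaLogit c hq).deriv, ← derivWithin_of_isOpen isOpen_Ioo hq]
    exact h.derivWithin_nonneg
  have hq₀ : 0 < q := hq.1
  have hq₁ : 0 < 1 - q := sub_pos.mpr hq.2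
  calc 0 ≤ q * (1 - q) * (a / q + b / (1 - q)) := mul_nonneg (by positivity) hderiv
    _ = a * (1 - q) + b * q := by field_simp

end

/-- The Beta calibration map is nondecreasing on (0,1) iff a ≥ 0 and b ≥ 0. -/
theorem betaCal_monotoneOn_iff (a b c : ℝ) :
    MonotoneOn (betaCal a b c) (Ioo (0:ℝ) 1) ↔ 0 ≤ a ∧ 0 ≤ b := by
  rw [betaCal_eq_sigmoid_comp, sigmoid_strictMono.monotoneOn_comp_iff]
  exact ⟨fun h ↦ nonneg_of_forall_mem_Ioo_affine_nonneg fun _ ↦ nonneg_of_monotoneOn_betaLogit c h,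
    fun ⟨ha, hb⟩ ↦ monotoneOn_betaLogit c ha hb⟩
end

section
/- The Beta link ratio r_β(q) = [q^a (1−q)^b e^{−c} (a − (a−b)q)] / [q(1−q)(q^a + (1−q)^b e^{−c})^2] is nonnegative for all q ∈ (0,1) if and only if a ≥ 0 and b ≥ 0. -/
/-!
All factors of `betaLink a b c q` other than `a - (a - b) * q` are positive for `q ∈ (0, 1)`,
so the ratio has the sign of `a - (a - b) * q = (1 - q) * a + q * b`. This affine function of `q`
is nonnegative on `(0, 1)` exactly when it is nonnegative at the endpoints, where it equals
`a` and `b`.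
-/

open Set

noncomputable def betaLink (a b c : ℝ) (q : ℝ) : ℝ :=
  (q ^ a * (1 - q) ^ b * Real.exp (-c) * (a - (a - b) * q)) /
    (q * (1 - q) * (q ^ a + (1 - q) ^ b * Real.exp (-c)) ^ 2)

theorem betaLink_nonneg_iff_of_mem_Ioo {a b c q : ℝ} (hq : q ∈ Ioo (0 : ℝ) 1) :
    0 ≤ betaLink a b c q ↔ 0 ≤ (1 - q) * a + q * b := by
  obtain ⟨hq0, hq1⟩ := hq
  have hqa : 0 < q ^ a := Real.rpow_pos_of_pos hq0 a
  have hqb : 0 < (1 - q) ^ b := Real.rpow_pos_of_pos (sub_pos.mpr hq1) b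
  have hnum : 0 < q ^ a * (1 - q) ^ b * Real.exp (-c) := by positivity
  have hden : 0 < q * (1 - q) * (q ^ a + (1 - q) ^ b * Real.exp (-c)) ^ 2 := by
    have : 0 < 1 - q := sub_pos.mpr hq1
    positivity
  have haffine : a - (a - b) * q = (1 - q) * a + q * b := by ring
  rw [betaLink, le_div_iff₀ hden, zero_mul, haffine, mul_nonneg_iff_of_pos_left hnum]

theorem affine_nonneg_on_Ioo_iff {a b : ℝ} :
    (∀ q ∈ Ioo (0 : ℝ) 1, 0 ≤ (1 - q) * a + q * b) ↔ 0 ≤ a ∧ 0 ≤ b := by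
  constructor
  · intro h
    have hclosed : IsClosed {q : ℝ | 0 ≤ (1 - q) * a + q * b} :=
      isClosed_le continuous_const (by fun_prop)
    have hIcc : Icc (0 : ℝ) 1 ⊆ {q : ℝ | 0 ≤ (1 - q) * a + q * b} := by
      rw [← closure_Ioo zero_ne_one]
      exact closure_minimal h hclosed
    have h0 := hIcc (left_mem_Icc.mpr zero_le_one)
    have h1 := hIcc (right_mem_Icc.mpr zero_le_one)
    simp only [mem_ofPred_eq] at h0 h1
    constructor <;> linarith
  · rintro ⟨ha, hb⟩ q ⟨hq0, hq1⟩
    have : 0 ≤ 1 - q := by linarith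
    positivity

/-- The Beta link ratio is nonnegative on (0,1) iff a ≥ 0 and b ≥ 0. -/
theorem betaLink_nonneg_iff (a b c : ℝ) :
    (∀ q ∈ Ioo (0:ℝ) 1, 0 ≤ betaLink a b c q) ↔ 0 ≤ a ∧ 0 ≤ b := by
  rw [← affine_nonneg_on_Ioo_iff]
  exact forall₂_congr fun _ hq => betaLink_nonneg_iff_of_mem_Ioo hq
end
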